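/- arXiv:1404.3441 — 2 statements merged into one kernel-verified Lean document; each statement's English description precedes it below -/
import Mathlib

section
/- The Gnedin–Fisher weights $V_{n,k} = \frac{(\gamma)_{n-k}(1-\psi)_{k-1}(1-\gamma+\psi)_{k-1}}{(1+\psi)_{n-1}(1+\gamma-\psi)_{n-1}}$ satisfy the Gibbs backward recursion with $\alpha=-1$: $V_{n,k} = (n+k)V_{n+1,k} + V_{n+1,k+1}$ for all $1\le k\le n$. -/
/-!
Write `n = a + b + 1` and `k = b + 1`. The three weights in the recursion share the factor
`(γ)_a (1-ψ)_b (1-γ+ψ)_b / ((1+ψ)_{a+b+1} (1+γ-ψ)_{a+b+1})`; dividing it out leaves the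
polynomial identity
`(1+ψ+a+b)(1+γ-ψ+a+b) = (a+2b+2)(γ+a) + (1-ψ+b)(1-γ+ψ+b)`,
in which the terms `ψγ - ψ²` cancel on both sides and the rest is `(1+a+b)² + (1+a+b)γ`.
-/

/-- Rising factorial `(x)_y = x (x+1) ⋯ (x+y-1)`. -/
noncomputable def risingFac (x : ℝ) (y : ℕ) : ℝ :=
  ∏ i ∈ Finset.range y, (x + i)

/-- The two-parameter Gnedin–Fisher Gibbs weights. -/
noncomputable def gfV (ψ γ : ℝ) (n k : ℕ) : ℝ :=
  risingFac γ (n - k) * risingFac (1 - ψ) (k - 1) * risingFac (1 - γ + ψ) (k - 1) /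
    (risingFac (1 + ψ) (n - 1) * risingFac (1 + γ - ψ) (n - 1))

lemma risingFac_succ (x : ℝ) (m : ℕ) : risingFac x (m + 1) = risingFac x m * (x + m) :=
  Finset.prod_range_succ _ _

lemma risingFac_pos {x : ℝ} (hx : 0 < x) (m : ℕ) : 0 < risingFac x m :=
  Finset.prod_pos fun _ _ => by positivity

lemma gfV_add_succ_succ (ψ γ : ℝ) (a b : ℕ) :
    gfV ψ γ (a + b + 1) (b + 1) =
      risingFac γ a * risingFac (1 - ψ) b * risingFac (1 - γ + ψ) b /
        (risingFac (1 + ψ) (a + b) * risingFac (1 + γ - ψ) (a + b)) := by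
  simp only [gfV, Nat.add_sub_cancel, Nat.add_sub_add_right]

lemma gfV_add_succ_succ_recursion {ψ γ : ℝ} (hψ : 0 < 1 + ψ) (hγψ : 0 < 1 + γ - ψ) (a b : ℕ) :
    gfV ψ γ (a + b + 1) (b + 1) =
      ((a + b + 1 : ℕ) + (b + 1 : ℕ) : ℝ) * gfV ψ γ (a + b + 1 + 1) (b + 1) +
        gfV ψ γ (a + b + 1 + 1) (b + 1 + 1) := by
  rw [show a + b + 1 + 1 = (a + 1) + b + 1 by ring, gfV_add_succ_succ, gfV_add_succ_succ,
    show a + 1 + b + 1 = a + (b + 1) + 1 by ring, gfV_add_succ_succ,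
    show a + 1 + b = a + b + 1 by ring, show a + (b + 1) = a + b + 1 by ring]
  have hD := (risingFac_pos hψ (a + b)).ne'
  have hE := (risingFac_pos hγψ (a + b)).ne'
  have hD' : 1 + ψ + ((a + b : ℕ) : ℝ) ≠ 0 := by positivity
  have hE' : 1 + γ - ψ + ((a + b : ℕ) : ℝ) ≠ 0 := by positivity
  simp only [risingFac_succ]
  field_simp
  push_cast
  ring

theorem gfV_backward_recursion_general
    (ψ γ : ℝ) (hψ : ψ ∈ Set.Ico (0 : ℝ) 1) (hγ : 0 < γ)
    (n k : ℕ) (hk : 1 ≤ k) (hkn : k ≤ n) :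
    gfV ψ γ n k = ((n : ℝ) + k) * gfV ψ γ (n + 1) k + gfV ψ γ (n + 1) (k + 1) := by
  obtain ⟨b, rfl⟩ : ∃ b, k = b + 1 := ⟨k - 1, by omega⟩
  obtain ⟨a, rfl⟩ : ∃ a, n = a + b + 1 := ⟨n - (b + 1), by omega⟩
  exact gfV_add_succ_succ_recursion (by linarith [hψ.1]) (by linarith [hψ.2]) a b

/-- the Gnedin–Fisher weights satisfy the Gibbs backward recursion
with `α = -1`, i.e. `V_{n,k} = (n + k) V_{n+1,k} + V_{n+1,k+1}`. -/
theorem gfV_backward_recursion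
    (ψ γ : ℝ) (hψ : ψ ∈ Set.Ico (0 : ℝ) 1) (hγ : 0 < γ) (hγψ : γ < ψ + 1)
    (n k : ℕ) (hk : 1 ≤ k) (hkn : k ≤ n) :
    gfV ψ γ n k = ((n : ℝ) + k) * gfV ψ γ (n + 1) k + gfV ψ γ (n + 1) (k + 1) :=
  gfV_backward_recursion_general ψ γ hψ hγ n k hk hkn
end

section
/- The limit defining the Poisson–Dirichlet posterior mean of Shannon entropy: for real constants $c_j = n_j - \alpha > 0$ ($j=1,\dots,k$) with $\sum_j c_j = n - k\alpha$ and $d = \theta + k\alpha$, the function $g(m) = \frac{1}{m-1}\left(1 - \frac{\sum_j \Gamma(c_j+m)/\Gamma(c_j) + \frac{\Gamma(m-\alpha)}{\Gamma(1-\alpha)} d}{\Gamma(\theta+n+m)/\Gamma(\theta+n)}\right)$ satisfies $\lim_{m\to1^+} g(m) = \psi_0(\theta+n+1) - \frac{1}{\theta+n}\left[d\,\psi_0(1-\alpha) + \sum_{j=1}^k c_j\,\psi_0(c_j+1)\right]$. -/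
open Filter Topology

/-- The digamma function `ψ₀ = Γ'/Γ`. -/
noncomputable def digamma (x : ℝ) : ℝ := deriv Real.Gamma x / Real.Gamma x

/-! If `N(1) = D(1) = s ≠ 0`, then `1 - N/D` vanishes at `1` and `g(m) = (1 - N m / D m)/(m - 1)`
is its difference quotient there, so `g(m) → (D'(1) - N'(1))/s`. With `N` the posterior numerator
and `D(m) = Γ(θ+n+m)/Γ(θ+n)`, both equal `θ + n` at `m = 1` because `Γ(c+1)/Γ(c) = c` and
`∑ c_j + d = θ + n`, and `Γ' = Γ ψ₀` turns the derivatives into the digamma terms. -/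

namespace Real

theorem hasDerivAt_Gamma_mul_digamma {x : ℝ} (hx : ∀ m : ℕ, x ≠ -m) :
    HasDerivAt Gamma (Gamma x * digamma x) x := by
  rw [digamma, mul_div_cancel₀ _ (Gamma_ne_zero hx)]
  exact (differentiableAt_Gamma hx).hasDerivAt

theorem Gamma_add_one_div_Gamma {a : ℝ} (ha : ∀ m : ℕ, a ≠ -m) : Gamma (a + 1) / Gamma a = a := by
  have ha0 : a ≠ 0 := by simpa using ha 0
  rw [Gamma_add_one ha0, mul_div_cancel_right₀ _ (Gamma_ne_zero ha)]

theorem hasDerivAt_Gamma_add_div_Gamma {a : ℝ} (ha : ∀ m : ℕ, a ≠ -m) :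
    HasDerivAt (fun m => Gamma (a + m) / Gamma a) (a * digamma (a + 1)) 1 := by
  have ha1 : ∀ m : ℕ, a + 1 ≠ -m := fun m h =>
    ha (m + 1) (by push_cast; linarith)
  have h := ((hasDerivAt_Gamma_mul_digamma ha1).comp_const_add a 1).div_const (Gamma a)
  rwa [mul_div_right_comm, Gamma_add_one_div_Gamma ha] at h

theorem hasDerivAt_Gamma_sub_div_Gamma {b : ℝ} (hb : ∀ m : ℕ, 1 - b ≠ -m) :
    HasDerivAt (fun m => Gamma (m - b) / Gamma (1 - b)) (digamma (1 - b)) 1 := by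
  have h := ((hasDerivAt_Gamma_mul_digamma hb).comp_sub_const 1 b).div_const (Gamma (1 - b))
  rwa [mul_div_cancel_left₀ _ (Gamma_ne_zero hb)] at h

end Real

theorem tendsto_one_sub_div_div_sub_of_hasDerivAt {N D : ℝ → ℝ} {N' D' s x : ℝ}
    (hN : HasDerivAt N N' x) (hD : HasDerivAt D D' x) (hNx : N x = s) (hDx : D x = s)
    (hs : s ≠ 0) :
    Tendsto (fun m => (1 - N m / D m) / (m - x)) (𝓝[≠] x) (𝓝 ((D' - N') / s)) := by
  have h := hasDerivAt_iff_tendsto_slope.mp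
    ((hasDerivAt_const x (1 : ℝ)).sub (hN.div hD (hDx ▸ hs)))
  rw [hNx, hDx] at h
  convert h using 2 with m
  · simp only [slope_def_field, Pi.sub_apply, Pi.div_apply, hNx, hDx, div_self hs, sub_self,
      sub_zero]
  · field_simp
    ring

/-- the limit, as `m → 1⁺`, of the Poisson–Dirichlet posterior mean of the
Tsallis index, yielding the posterior mean of Shannon entropy. -/
theorem tsallis_posterior_mean_PD_limit
    (α θ : ℝ) (hα : α ∈ Set.Ioo (0 : ℝ) 1) (hθ : -α < θ)
    (k : ℕ) (hk : 1 ≤ k) (nvec : Fin k → ℕ) (hnvec : ∀ j, 1 ≤ nvec j)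
    (n : ℕ) (hn : n = ∑ j, nvec j)
    (c : Fin k → ℝ) (hc : ∀ j, c j = (nvec j : ℝ) - α)
    (d : ℝ) (hd : d = θ + k * α) :
    Tendsto
      (fun m : ℝ =>
        (1 - ((∑ j, Real.Gamma (c j + m) / Real.Gamma (c j))
              + Real.Gamma (m - α) / Real.Gamma (1 - α) * d) /
            (Real.Gamma (θ + n + m) / Real.Gamma (θ + n))) / (m - 1))
      (nhdsWithin 1 (Set.Ioi 1))
      (nhds (digamma (θ + n + 1)
        - (θ + n)⁻¹ * (d * digamma (1 - α) + ∑ j, c j * digamma (c j + 1)))) := by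
  have ne_neg_natCast_of_pos {x : ℝ} (hx : 0 < x) : ∀ m : ℕ, x ≠ -m := fun m h => by
    linarith [m.cast_nonneg (α := ℝ)]
  have h1α : 0 < 1 - α := sub_pos.mpr hα.2
  have hk_le_n : k ≤ n := by
    simpa [hn] using Finset.card_nsmul_le_sum Finset.univ nvec 1 fun j _ => hnvec j
  have hθn : 0 < θ + n := by
    have : (1 : ℝ) ≤ n := by exact_mod_cast hk.trans hk_le_n
    linarith
  have hc_pos (j : Fin k) : 0 < c j := by
    rw [hc]; linarith [(Nat.one_le_cast (α := ℝ)).mpr (hnvec j)]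
  have hsum : ∑ j, c j + d = θ + n := by
    simp only [hc, Finset.sum_sub_distrib, hn, Nat.cast_sum, Finset.sum_const, Finset.card_fin,
      nsmul_eq_mul, hd]
    ring
  have hN := (HasDerivAt.fun_sum (u := Finset.univ) fun j _ =>
    Real.hasDerivAt_Gamma_add_div_Gamma (ne_neg_natCast_of_pos (hc_pos j))).fun_add
    ((Real.hasDerivAt_Gamma_sub_div_Gamma (ne_neg_natCast_of_pos h1α)).mul_const d)
  have hN1 : ∑ j, Real.Gamma (c j + 1) / Real.Gamma (c j)
      + Real.Gamma (1 - α) / Real.Gamma (1 - α) * d = θ + n := by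
    simp only [Real.Gamma_add_one_div_Gamma (ne_neg_natCast_of_pos (hc_pos _)),
      div_self (Real.Gamma_pos_of_pos h1α).ne', one_mul, hsum]
  have hD := Real.hasDerivAt_Gamma_add_div_Gamma (ne_neg_natCast_of_pos hθn)
  have hlim := tendsto_one_sub_div_div_sub_of_hasDerivAt hN hD hN1
    (Real.Gamma_add_one_div_Gamma (ne_neg_natCast_of_pos hθn)) hθn.ne'
  convert hlim.mono_left (nhdsGT_le_nhdsNE 1) using 2
  rw [sub_div, mul_div_cancel_left₀ _ hθn.ne']
  ring
end
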